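/- Let N > m ≥ 1 and let a_1, …, a_N and k_1, …, k_m be positive integers (no Calabi–Yau condition assumed). Fix z ∈ ℂ with z ≠ 0, and define F : ℂ → ℂ by F(w) = (−((N−m)/(N·w^N)) − ((N+m)/(N·z^N))) · (∏_{l=1}^m e_{k_l}(w,z)/(k_l·w)) / q(w,z). Then deriv F z = (Σ_{i=1}^N a_i − Σ_{l=1}^m k_l) · (∏_{l=1}^m (k_l·z)^{k_l}) / (z^{N+1} · ∏_{i=1}^N (a_i·z)^{a_i−1}). In particular, deriv F z = 0 if and only if Σ_{i=1}^N a_i = Σ_{l=1}^m k_l. -/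

import Mathlib

open Finset

private lemma lin_val {A j : ℕ} (hj : j ≤ A) (z : ℂ) :
    (j:ℂ) * z + ((A - j : ℕ):ℂ) * z = (A:ℂ) * z := by
  rw [Nat.cast_sub hj]; ring

private lemma prod_lin_val (s : Finset ℕ) (A : ℕ) (h : ∀ j ∈ s, j ≤ A) (z : ℂ) :
    ∏ j ∈ s, ((j:ℂ) * z + ((A - j : ℕ):ℂ) * z) = ((A:ℂ) * z) ^ s.card := by
  rw [Finset.prod_congr rfl (fun j hj => lin_val (h j hj) z), Finset.prod_const]

private lemma prod_lin_hasDerivAt (s : Finset ℕ) (A : ℕ) (h : ∀ j ∈ s, j ≤ A) (z : ℂ) :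
    HasDerivAt (fun w => ∏ j ∈ s, ((j:ℂ) * w + ((A - j : ℕ):ℂ) * z))
      (((A:ℂ) * z) ^ (s.card - 1) * (∑ j ∈ s, (j:ℂ))) z := by
  have hd : ∀ j ∈ s, HasDerivAt (fun w => (j:ℂ) * w + ((A - j : ℕ):ℂ) * z) (j:ℂ) z := by
    intro j hj
    simpa using ((hasDerivAt_id z).const_mul (j:ℂ)).add_const (((A - j : ℕ):ℂ) * z)
  have H := HasDerivAt.fun_finsetProd hd
  refine H.congr_deriv (Eq.symm ?_)
  rw [Finset.mul_sum]
  refine Finset.sum_congr rfl fun j hj => ?_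
  have he : ∏ i ∈ s.erase j, ((i:ℂ) * z + ((A - i : ℕ):ℂ) * z)
      = ((A:ℂ) * z) ^ (s.card - 1) := by
    rw [prod_lin_val _ A (fun i hi => h i (Finset.mem_of_mem_erase hi)) z,
      Finset.card_erase_of_mem hj]
  rw [he, smul_eq_mul]

private lemma sum_range_cast' (K : ℕ) :
    (∑ i ∈ Finset.range (K + 1), (i:ℂ)) * 2 = (K:ℂ) * ((K:ℂ) + 1) := by
  have h2 : ((∑ i ∈ Finset.range (K+1), i) * 2 : ℕ) = ((K+1) * K : ℕ) := by
    simpa using Finset.sum_range_id_mul_two (K + 1)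
  calc (∑ i ∈ Finset.range (K + 1), (i:ℂ)) * 2
      = (((∑ i ∈ Finset.range (K+1), i) * 2 : ℕ) : ℂ) := by push_cast; ring
    _ = (((K+1) * K : ℕ) : ℂ) := by rw [h2]
    _ = (K:ℂ) * ((K:ℂ) + 1) := by push_cast; ring

private lemma sum_Icc_cast (M : ℕ) :
    (∑ i ∈ Finset.Icc 1 M, (i:ℂ)) * 2 = (M:ℂ) * ((M:ℂ) + 1) := by
  have hins : Finset.range (M + 1) = insert 0 (Finset.Icc 1 M) := by
    ext x; simp [Finset.mem_range, Finset.mem_Icc]; omega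
  have h0 : (0:ℕ) ∉ Finset.Icc 1 M := by simp
  have : (∑ i ∈ Finset.range (M + 1), (i:ℂ)) = ∑ i ∈ Finset.Icc 1 M, (i:ℂ) := by
    rw [hins, Finset.sum_insert h0]; simp
  rw [← this]; exact sum_range_cast' M

/-- `e_k(x,y) = ∏_{i=0}^{k} (i·x + (k−i)·y)`. -/
noncomputable def ek (k : ℕ) (x y : ℂ) : ℂ :=
  ∏ i ∈ Finset.range (k + 1), ((i : ℂ) * x + ((k - i : ℕ) : ℂ) * y)

/-- `q(x,y) = ∏_{i=1}^{N} ∏_{j=1}^{a_i−1} (j·x + (a_i−j)·y)`, with empty inner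
products (when `a_i = 1`) equal to `1`. -/
noncomputable def qpoly {N : ℕ} (a : Fin N → ℕ) (x y : ℂ) : ℂ :=
  ∏ i, ∏ j ∈ Finset.Icc 1 (a i - 1), ((j : ℂ) * x + ((a i - j : ℕ) : ℂ) * y)

private lemma ek_val (K : ℕ) (z : ℂ) : ek K z z = ((K:ℂ) * z) ^ (K + 1) := by
  rw [ek, prod_lin_val _ K (fun j hj => by simpa [Nat.lt_succ_iff] using Finset.mem_range.1 hj) z,
    Finset.card_range]

private lemma ekdiv_hasDerivAt (K : ℕ) (hK : 0 < K) (z : ℂ) (hz : z ≠ 0) :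
    HasDerivAt (fun w => ek K w z / ((K:ℂ) * w))
      (((K:ℂ) * z) ^ K * (((K:ℂ) - 1) / (2 * z))) z := by
  have hKc : (K:ℂ) ≠ 0 := Nat.cast_ne_zero.2 hK.ne'
  have hKz : (K:ℂ) * z ≠ 0 := mul_ne_zero hKc hz
  have hnum : HasDerivAt (fun w => ek K w z)
      (((K:ℂ) * z) ^ K * (∑ i ∈ Finset.range (K + 1), (i:ℂ))) z := by
    have := prod_lin_hasDerivAt (Finset.range (K+1)) K
      (fun j hj => by simpa [Nat.lt_succ_iff] using Finset.mem_range.1 hj) z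
    simpa [ek, Finset.card_range] using this
  have hden : HasDerivAt (fun w => (K:ℂ) * w) (K:ℂ) z := by
    simpa using (hasDerivAt_id z).const_mul (K:ℂ)
  have H := hnum.fun_div hden hKz
  refine H.congr_deriv (Eq.symm ?_)
  rw [ek_val]
  have h2 := sum_range_cast' K
  set S := ∑ i ∈ Finset.range (K + 1), (i:ℂ) with hS
  rw [pow_succ]
  set X := ((K:ℂ) * z) ^ K with hX
  field_simp
  ring_nf
  linear_combination (-X) * h2

private lemma inner_hasDerivAt (A : ℕ) (hA : 0 < A) (z : ℂ) (hz : z ≠ 0) :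
    HasDerivAt (fun w => ∏ j ∈ Finset.Icc 1 (A - 1), ((j:ℂ) * w + ((A - j : ℕ):ℂ) * z))
      (((A:ℂ) * z) ^ (A - 1) * (((A:ℂ) - 1) / (2 * z))) z := by
  have H := prod_lin_hasDerivAt (Finset.Icc 1 (A - 1)) A
    (fun j hj => by have := (Finset.mem_Icc.1 hj).2; omega) z
  rw [Nat.card_Icc] at H
  simp only [Nat.add_sub_cancel] at H
  convert H using 1
  obtain ⟨M, rfl⟩ : ∃ M, A = M + 1 := ⟨A - 1, by omega⟩
  simp only [Nat.add_sub_cancel]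
  rcases M with _ | n
  · simp
  · have h2 := sum_Icc_cast (n + 1)
    set S := ∑ i ∈ Finset.Icc 1 (n + 1), (i:ℂ) with hS
    have hc1 : (((n:ℕ) + 1 + 1 : ℕ) : ℂ) = (n:ℂ) + 2 := by push_cast; ring
    rw [pow_succ, hc1]
    set X := (((n:ℂ) + 2) * z) ^ n with hX
    push_cast at h2 ⊢
    field_simp
    ring_nf
    linear_combination (-((↑n * z + z * 2) ^ n)) * h2

private lemma final_alg (Nc mc A K Pz Qz y z : ℂ) (hz : z ≠ 0) (hy : y ≠ 0)
    (hN : Nc ≠ 0) (hQ : Qz ≠ 0) :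
    (((Nc - mc) / (y * z) * Pz
        + (-((Nc - mc) / (Nc * y)) - (Nc + mc) / (Nc * y)) * (Pz * ((K - mc) / (2 * z)))) * Qz
      - ((-((Nc - mc) / (Nc * y)) - (Nc + mc) / (Nc * y)) * Pz) * (Qz * ((A - Nc) / (2 * z))))
      / Qz ^ 2
    = (A - K) * Pz / (y * z * Qz) := by
  rw [div_eq_div_iff (pow_ne_zero 2 hQ) (mul_ne_zero (mul_ne_zero hy hz) hQ)]
  field_simp
  have e : Nc ^ 2 * Nc⁻¹ ^ 2 * (y ^ 3 * y⁻¹ ^ 3) * (z ^ 3 * z⁻¹ ^ 3) = 1 := by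
    rw [← mul_pow, mul_inv_cancel₀ hN, one_pow, ← mul_pow, mul_inv_cancel₀ hy, one_pow,
      ← mul_pow, mul_inv_cancel₀ hz, one_pow, mul_one, mul_one]
  linear_combination (0 : ℂ) * e

/-- Without the Calabi–Yau condition, for
`F(w) = (−(N−m)/(N·w^N) − (N+m)/(N·z^N)) · (∏_l e_{k_l}(w,z)/(k_l·w)) / q(w,z)`
we have
`deriv F z = (Σ a_i − Σ k_l) · (∏_l (k_l·z)^{k_l}) / (z^{N+1} · ∏_i (a_i·z)^{a_i−1})`;
in particular `deriv F z = 0 ↔ Σ a_i = Σ k_l`. -/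
theorem deriv_typeIII_factor
    (N m : ℕ) (hm : 1 ≤ m) (hNm : m < N)
    (a : Fin N → ℕ) (ha : ∀ i, 0 < a i)
    (k : Fin m → ℕ) (hk : ∀ l, 0 < k l)
    (z : ℂ) (hz : z ≠ 0)
    (F : ℂ → ℂ)
    (hF : ∀ w : ℂ, F w =
      (-(((N : ℂ) - (m : ℂ)) / ((N : ℂ) * w ^ N))
        - (((N : ℂ) + (m : ℂ)) / ((N : ℂ) * z ^ N)))
      * (∏ l, ek (k l) w z / ((k l : ℂ) * w)) / qpoly a w z) :
    deriv F z
      = (((∑ i, a i : ℕ) : ℂ) - ((∑ l, k l : ℕ) : ℂ))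
          * (∏ l, ((k l : ℂ) * z) ^ (k l))
          / (z ^ (N + 1) * ∏ i, ((a i : ℂ) * z) ^ (a i - 1))
    ∧ (deriv F z = 0 ↔ ∑ i, a i = ∑ l, k l) := by
  have hN : 0 < N := lt_trans (by omega) hNm
  have hNc : (N:ℂ) ≠ 0 := Nat.cast_ne_zero.2 hN.ne'
  have hzN : z ^ N ≠ 0 := pow_ne_zero _ hz
  -- notation
  set Pz : ℂ := ∏ l, ((k l : ℂ) * z) ^ (k l) with hPzdef
  set Qz : ℂ := ∏ i, ((a i : ℂ) * z) ^ (a i - 1) with hQzdef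
  have hPzne : Pz ≠ 0 := by
    rw [hPzdef]
    exact Finset.prod_ne_zero_iff.2 fun l _ =>
      pow_ne_zero _ (mul_ne_zero (Nat.cast_ne_zero.2 (hk l).ne') hz)
  have hQzne : Qz ≠ 0 := by
    rw [hQzdef]
    exact Finset.prod_ne_zero_iff.2 fun i _ =>
      pow_ne_zero _ (mul_ne_zero (Nat.cast_ne_zero.2 (ha i).ne') hz)
  set Sk : ℂ := ∑ l, (((k l : ℂ) - 1) / (2 * z)) with hSkdef
  set Sa : ℂ := ∑ i, (((a i : ℂ) - 1) / (2 * z)) with hSadef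
  -- derivative of P
  have hval : ∀ l : Fin m, ek (k l) z z / ((k l : ℂ) * z) = ((k l : ℂ) * z) ^ (k l) := by
    intro l
    have hKz : (k l : ℂ) * z ≠ 0 := mul_ne_zero (Nat.cast_ne_zero.2 (hk l).ne') hz
    rw [ek_val, pow_succ, mul_div_assoc, div_self hKz, mul_one]
  have hP : HasDerivAt (fun w => ∏ l, ek (k l) w z / ((k l : ℂ) * w)) (Pz * Sk) z := by
    have H := HasDerivAt.fun_finsetProd
      (fun l (_ : l ∈ (Finset.univ : Finset (Fin m))) => ekdiv_hasDerivAt (k l) (hk l) z hz)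
    refine H.congr_deriv (Eq.symm ?_)
    rw [hSkdef, Finset.mul_sum]
    refine Finset.sum_congr rfl fun l _ => ?_
    rw [smul_eq_mul]
    have he : (∏ j ∈ Finset.univ.erase l, ek (k j) z z / ((k j : ℂ) * z))
        = ∏ j ∈ Finset.univ.erase l, ((k j : ℂ) * z) ^ (k j) :=
      Finset.prod_congr rfl fun j _ => hval j
    rw [he, ← mul_assoc, Finset.prod_erase_mul _ _ (Finset.mem_univ l), hPzdef]
  -- derivative of Q
  have hqval : ∀ i : Fin N,
      (∏ j ∈ Finset.Icc 1 (a i - 1), ((j:ℂ) * z + ((a i - j : ℕ):ℂ) * z))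
        = ((a i : ℂ) * z) ^ (a i - 1) := by
    intro i
    rw [prod_lin_val _ (a i) (fun j hj => by have := (Finset.mem_Icc.1 hj).2; omega) z,
      Nat.card_Icc, Nat.add_sub_cancel]
  have hQ : HasDerivAt (fun w => qpoly a w z) (Qz * Sa) z := by
    have H := HasDerivAt.fun_finsetProd
      (fun i (_ : i ∈ (Finset.univ : Finset (Fin N))) => inner_hasDerivAt (a i) (ha i) z hz)
    refine H.congr_deriv (Eq.symm ?_)
    rw [hSadef, Finset.mul_sum]
    refine Finset.sum_congr rfl fun i _ => ?_
    rw [smul_eq_mul]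
    have he : (∏ j ∈ Finset.univ.erase i,
        ∏ x ∈ Finset.Icc 1 (a j - 1), ((x:ℂ) * z + ((a j - x : ℕ):ℂ) * z))
        = ∏ j ∈ Finset.univ.erase i, ((a j : ℂ) * z) ^ (a j - 1) :=
      Finset.prod_congr rfl fun j _ => hqval j
    rw [he, ← mul_assoc, Finset.prod_erase_mul _ _ (Finset.mem_univ i), hQzdef]
  have hQval : qpoly a z z = Qz := by
    rw [qpoly, hQzdef]
    exact Finset.prod_congr rfl fun i _ => hqval i
  have hPval : (∏ l, ek (k l) z z / ((k l : ℂ) * z)) = Pz := by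
    rw [hPzdef]; exact Finset.prod_congr rfl fun l _ => hval l
  -- derivative of the prefactor
  have hg1 : HasDerivAt (fun w => -(((N : ℂ) - (m : ℂ)) / ((N : ℂ) * w ^ N))
      - (((N : ℂ) + (m : ℂ)) / ((N : ℂ) * z ^ N)))
      (((N : ℂ) - (m : ℂ)) / (z ^ N * z)) z := by
    have hNzN : (N:ℂ) * z ^ N ≠ 0 := mul_ne_zero hNc hzN
    have hpow : HasDerivAt (fun w => (N:ℂ) * w ^ N)
        ((N:ℂ) * (((N:ℕ):ℂ) * z ^ (N - 1))) z := (hasDerivAt_pow N z).const_mul (N:ℂ)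
    have H := ((hasDerivAt_const z (((N : ℂ) - (m : ℂ)))).fun_div hpow hNzN).neg.sub_const
      (((N : ℂ) + (m : ℂ)) / ((N : ℂ) * z ^ N))
    refine H.congr_deriv (Eq.symm ?_)
    have hzsplit : z ^ N = z ^ (N - 1) * z := by
      conv_lhs => rw [show N = (N - 1) + 1 by omega]
      rw [pow_succ]
    rw [hzsplit]
    have hu : z ^ (N - 1) ≠ 0 := pow_ne_zero _ hz
    set u := z ^ (N - 1) with hu'
    field_simp
    ring
  -- assemble
  have hFeq : F = fun w => (-(((N : ℂ) - (m : ℂ)) / ((N : ℂ) * w ^ N))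
        - (((N : ℂ) + (m : ℂ)) / ((N : ℂ) * z ^ N)))
      * (∏ l, ek (k l) w z / ((k l : ℂ) * w)) / qpoly a w z := funext hF
  have hQz0 : (fun w => qpoly a w z) z ≠ 0 := by simpa [hQval] using hQzne
  have HF := ((hg1.fun_mul hP).fun_div hQ hQz0)
  rw [← hFeq] at HF
  have hderiv := HF.deriv
  -- value of g1 at z and the sums
  have hSkval : Sk = ((((∑ l, k l : ℕ) : ℂ)) - (m : ℂ)) / (2 * z) := by
    rw [hSkdef, ← Finset.sum_div]
    congr 1
    rw [Finset.sum_sub_distrib]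
    push_cast
    simp [Finset.card_univ]
  have hSaval : Sa = ((((∑ i, a i : ℕ) : ℂ)) - (N : ℂ)) / (2 * z) := by
    rw [hSadef, ← Finset.sum_div]
    congr 1
    rw [Finset.sum_sub_distrib]
    push_cast
    simp [Finset.card_univ]
  have key : deriv F z
      = (((∑ i, a i : ℕ) : ℂ) - ((∑ l, k l : ℕ) : ℂ)) * Pz / (z ^ (N + 1) * Qz) := by
    rw [hderiv]
    simp only [hPval, hQval]
    rw [hSkval, hSaval, pow_succ]
    exact final_alg (N:ℂ) (m:ℂ) _ _ Pz Qz (z^N) z hz hzN hNc hQzne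
  refine ⟨key, ?_⟩
  rw [key]
  have hden : z ^ (N + 1) * Qz ≠ 0 := mul_ne_zero (pow_ne_zero _ hz) hQzne
  rw [div_eq_zero_iff]
  simp only [hden, or_false, mul_eq_zero, hPzne, or_false]
  rw [sub_eq_zero]
  exact ⟨fun h => Nat.cast_injective h, fun h => by rw [h]⟩
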